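/- arXiv:1902.05678 — 2 statements merged into one kernel-verified Lean document; each statement's English description precedes it below -/
import Mathlib

section
/- MAX SMTI-1TM admits a woman-strategy-proof 2-approximate-stable mechanism: there exists a mechanism S on SMTI-1TM instances such that for every instance I, S(I) is a stable matching with 2·|S(I)| ≥ |M_opt| for every stable matching M_opt of I, and no woman can, by submitting a falsified preference list while all other lists are unchanged, obtain an outcome she prefers with respect to her true list. -/
/-- An instance of the stable marriage problem with ties and incomplete lists (SMTI),
with men of type `α` and women of type `β`.  Each person's preference list is
represented by a rank function: `mpref m w = none` means woman `w` is unacceptable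
to man `m`, and `mpref m w = some r` means `w` is acceptable with rank `r`
(smaller rank = more preferred; equal ranks = a tie).  This encodes exactly a
total preorder on the set of acceptable partners. -/
structure SMInst (α β : Type) where
  mpref : α → β → Option ℕ
  wpref : β → α → Option ℕ

namespace SMInst

variable {α β : Type}

/-- Woman `w` is acceptable to man `m`. -/
def mAcc (I : SMInst α β) (m : α) (w : β) : Prop := (I.mpref m w).isSome

/-- Man `m` is acceptable to woman `w`. -/
def wAcc (I : SMInst α β) (w : β) (m : α) : Prop := (I.wpref w m).isSome

/-- Man `m` strictly prefers woman `w` to woman `w'`. -/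
def mPref (I : SMInst α β) (m : α) (w w' : β) : Prop :=
  ∃ r r', I.mpref m w = some r ∧ I.mpref m w' = some r' ∧ r < r'

/-- Woman `w` strictly prefers man `m` to man `m'`. -/
def wPref (I : SMInst α β) (w : β) (m m' : α) : Prop :=
  ∃ r r', I.wpref w m = some r ∧ I.wpref w m' = some r' ∧ r < r'

/-- `M` is a matching of `I`: all pairs mutually acceptable and no person in two pairs. -/
def IsMatching (I : SMInst α β) (M : Finset (α × β)) : Prop :=
  (∀ p ∈ M, I.mAcc p.1 p.2 ∧ I.wAcc p.2 p.1) ∧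
  (∀ p ∈ M, ∀ q ∈ M, p.1 = q.1 → p = q) ∧
  (∀ p ∈ M, ∀ q ∈ M, p.2 = q.2 → p = q)

/-- Man `m` is single (unmatched) in `M`. -/
def mSingle (M : Finset (α × β)) (m : α) : Prop := ∀ w, (m, w) ∉ M

/-- Woman `w` is single (unmatched) in `M`. -/
def wSingle (M : Finset (α × β)) (w : β) : Prop := ∀ m, (m, w) ∉ M

/-- `(m, w)` blocks `M` in instance `I`. -/
def Blocks (I : SMInst α β) (M : Finset (α × β)) (m : α) (w : β) : Prop :=
  I.mAcc m w ∧ I.wAcc w m ∧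
  (mSingle M m ∨ ∃ w', (m, w') ∈ M ∧ I.mPref m w w') ∧
  (wSingle M w ∨ ∃ m', (m', w) ∈ M ∧ I.wPref w m m')

/-- `M` is a (weakly) stable matching of `I`. -/
def IsStable (I : SMInst α β) (M : Finset (α × β)) : Prop :=
  I.IsMatching M ∧ ∀ m w, ¬ I.Blocks M m w

/-- Man `m` prefers matching `M'` to matching `M`, with respect to his list in `I`:
he is matched in `M'` to an acceptable partner, and he is either single in `M`
or strictly prefers his `M'`-partner to his `M`-partner. -/
def mPrefMatching (I : SMInst α β) (m : α) (M' M : Finset (α × β)) : Prop :=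
  ∃ w, (m, w) ∈ M' ∧ I.mAcc m w ∧
    (mSingle M m ∨ ∃ w', (m, w') ∈ M ∧ I.mPref m w w')

/-- Woman `w` prefers matching `M'` to matching `M`, with respect to her list in `I`. -/
def wPrefMatching (I : SMInst α β) (w : β) (M' M : Finset (α × β)) : Prop :=
  ∃ m, (m, w) ∈ M' ∧ I.wAcc w m ∧
    (wSingle M w ∨ ∃ m', (m', w) ∈ M ∧ I.wPref w m m')

/-- `I` and `I'` differ only in man `m`'s preference list. -/
def mDiffOnly (I I' : SMInst α β) (m : α) : Prop :=
  I.wpref = I'.wpref ∧ ∀ m', m' ≠ m → I.mpref m' = I'.mpref m'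

/-- `I` and `I'` differ only in woman `w`'s preference list. -/
def wDiffOnly (I I' : SMInst α β) (w : β) : Prop :=
  I.mpref = I'.mpref ∧ ∀ w', w' ≠ w → I.wpref w' = I'.wpref w'

/-- Men's lists contain no ties. -/
def MStrict (I : SMInst α β) : Prop :=
  ∀ m w w', I.mpref m w = I.mpref m w' → I.mAcc m w → w = w'

/-- Women's lists contain no ties. -/
def WStrict (I : SMInst α β) : Prop :=
  ∀ w m m', I.wpref w m = I.wpref w m' → I.wAcc w m → m = m'

/-- `I` is an SMI instance: no ties at all (all lists strictly ordered). -/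
def NoTies (I : SMInst α β) : Prop := I.MStrict ∧ I.WStrict

/-- `I` is an SMTI-1TM instance: ties may occur only in men's lists,
i.e. women's lists are strictly ordered. -/
def OneTM (I : SMInst α β) : Prop := I.WStrict

/-- `I'` is obtained from `I` by breaking ties: same acceptable sets, and every
strict preference of `I` is preserved in `I'` (so each person's list in `I'` is a
linear extension of the corresponding total preorder in `I`). -/
def Refines (I I' : SMInst α β) : Prop :=
  (∀ m w, I.mAcc m w ↔ I'.mAcc m w) ∧
  (∀ w m, I.wAcc w m ↔ I'.wAcc w m) ∧
  (∀ m w w', I.mPref m w w' → I'.mPref m w w') ∧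
  (∀ w m m', I.wPref w m m' → I'.wPref w m m')

end SMInst

/-
Break the ties of the men's lists by a fixed enumeration of the women and run women-proposing
deferred acceptance. Its outcome is stable for the tie-broken instance, hence for the original
one, and a stable matching meets every pair of any other matching, so it has at least half its
size. A woman's misreport leaves the tie-broken men's lists unchanged, so strategy-proofness
reduces to that of deferred acceptance for strict preferences, which follows from the Blocking
Lemma of Gale and Sotomayor.
-/

namespace SMInst

variable {α β : Type}

section Preferences

variable {J : SMInst α β} {m m₁ m₂ m₃ : α} {w w₁ w₂ w₃ : β}

lemma MStrict.mPref_or_mPref (hM : J.MStrict) (h₁ : J.mAcc m w₁) (h₂ : J.mAcc m w₂)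
    (hne : w₁ ≠ w₂) : J.mPref m w₁ w₂ ∨ J.mPref m w₂ w₁ := by
  obtain ⟨r, hr⟩ := Option.isSome_iff_exists.1 h₁
  obtain ⟨r', hr'⟩ := Option.isSome_iff_exists.1 h₂
  rcases lt_trichotomy r r' with h | rfl | h
  · exact Or.inl ⟨r, r', hr, hr', h⟩
  · exact absurd (hM m w₁ w₂ (hr.trans hr'.symm) h₁) hne
  · exact Or.inr ⟨r', r, hr', hr, h⟩

lemma WStrict.wPref_or_wPref (hW : J.WStrict) (h₁ : J.wAcc w m₁) (h₂ : J.wAcc w m₂)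
    (hne : m₁ ≠ m₂) : J.wPref w m₁ m₂ ∨ J.wPref w m₂ m₁ := by
  obtain ⟨r, hr⟩ := Option.isSome_iff_exists.1 h₁
  obtain ⟨r', hr'⟩ := Option.isSome_iff_exists.1 h₂
  rcases lt_trichotomy r r' with h | rfl | h
  · exact Or.inl ⟨r, r', hr, hr', h⟩
  · exact absurd (hW w m₁ m₂ (hr.trans hr'.symm) h₁) hne
  · exact Or.inr ⟨r', r, hr', hr, h⟩

lemma mAcc_of_mPref (h : J.mPref m w₁ w₂) : J.mAcc m w₁ := by
  obtain ⟨r, -, hr, -⟩ := h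
  simp [mAcc, hr]

lemma wAcc_of_wPref (h : J.wPref w m₁ m₂) : J.wAcc w m₁ := by
  obtain ⟨r, -, hr, -⟩ := h
  simp [wAcc, hr]

lemma mPref_asymm (h : J.mPref m w₁ w₂) (h' : J.mPref m w₂ w₁) : False := by
  obtain ⟨r, r', hr, hr', hlt⟩ := h
  obtain ⟨s, s', hs, hs', hlt'⟩ := h'
  simp only [hr, hr', Option.some.injEq] at hs hs'
  omega

lemma wPref_irrefl (h : J.wPref w m₁ m₁) : False := by
  obtain ⟨r, r', hr, hr', hlt⟩ := h
  simp only [hr, Option.some.injEq] at hr'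
  omega

lemma mPref_of_not_mPref_of_mPref (h₁ : J.mAcc m w₁) (h₂₁ : ¬ J.mPref m w₂ w₁)
    (h₂₃ : J.mPref m w₂ w₃) : J.mPref m w₁ w₃ := by
  obtain ⟨r, hr⟩ := Option.isSome_iff_exists.1 h₁
  obtain ⟨s, s', hs, hs', hlt⟩ := h₂₃
  exact ⟨r, s', hr, hs', lt_of_le_of_lt (not_lt.1 fun h => h₂₁ ⟨s, r, hs, hr, h⟩) hlt⟩

lemma wPref_of_wPref_of_not_wPref (h₁₂ : J.wPref w m₁ m₂) (h₃ : J.wAcc w m₃)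
    (h₃₂ : ¬ J.wPref w m₃ m₂) : J.wPref w m₁ m₃ := by
  obtain ⟨r, hr⟩ := Option.isSome_iff_exists.1 h₃
  obtain ⟨s, s', hs, hs', hlt⟩ := h₁₂
  exact ⟨s, r, hs, hr, lt_of_lt_of_le hlt (not_lt.1 fun h => h₃₂ ⟨r, s', hr, hs', h⟩)⟩

end Preferences

section Matchings

variable {I I' J : SMInst α β} {M N : Finset (α × β)} {m m' : α} {w w' : β}

lemma IsMatching.eq_of_mem_left (hM : J.IsMatching M) (h : (m, w) ∈ M) (h' : (m, w') ∈ M) :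
    w = w' :=
  (Prod.ext_iff.1 (hM.2.1 _ h _ h' rfl)).2

lemma IsMatching.eq_of_mem_right (hM : J.IsMatching M) (h : (m, w) ∈ M) (h' : (m', w) ∈ M) :
    m = m' :=
  (Prod.ext_iff.1 (hM.2.2 _ h _ h' rfl)).1

lemma blocks_congr (hm : I.mpref m = I'.mpref m) (hw : I.wpref w = I'.wpref w) :
    I.Blocks M m w ↔ I'.Blocks M m w := by
  simp only [Blocks, mAcc, wAcc, mPref, wPref, hm, hw]

lemma Refines.isStable (h : I.Refines I') (hM : I'.IsStable M) : I.IsStable M := by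
  obtain ⟨hm, hw, hmp, hwp⟩ := h
  refine ⟨⟨fun p hp => ⟨(hm _ _).2 (hM.1.1 p hp).1, (hw _ _).2 (hM.1.1 p hp).2⟩, hM.1.2⟩, ?_⟩
  rintro m w ⟨hmw, hwm, hmside, hwside⟩
  refine hM.2 m w ⟨(hm _ _).1 hmw, (hw _ _).1 hwm, ?_, ?_⟩
  · exact hmside.imp_right fun ⟨w', hw', h⟩ => ⟨w', hw', hmp _ _ _ h⟩
  · exact hwside.imp_right fun ⟨m', hm', h⟩ => ⟨m', hm', hwp _ _ _ h⟩

lemma IsMatching.of_wDiffOnly (h : I.wDiffOnly I' w) (hM : I'.IsMatching M)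
    (hw : ∀ m, (m, w) ∈ M → I.wAcc w m) : I.IsMatching M := by
  refine ⟨fun ⟨m, w'⟩ hp => ⟨?_, ?_⟩, hM.2⟩
  · simpa only [mAcc, h.1] using (hM.1 _ hp).1
  · by_cases hw' : w' = w
    · subst hw'
      exact hw m hp
    · simpa only [wAcc, h.2 w' hw'] using (hM.1 _ hp).2

/-- Every pair of `N` meets a pair of the stable matching `M`, since otherwise it would block `M`. -/
theorem IsMatching.card_le_two_mul (hN : J.IsMatching N) (hM : J.IsStable M) :
    N.card ≤ 2 * M.card := by
  classical
  set men := M.image Prod.fst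
  set women := M.image Prod.snd
  have hcover : ∀ p ∈ N, p.1 ∈ men ∨ p.2 ∈ women := by
    rintro ⟨m, w⟩ hp
    by_contra! h
    exact hM.2 m w ⟨(hN.1 _ hp).1, (hN.1 _ hp).2,
      Or.inl fun w' hw' => h.1 (Finset.mem_image.2 ⟨_, hw', rfl⟩),
      Or.inl fun m' hm' => h.2 (Finset.mem_image.2 ⟨_, hm', rfl⟩)⟩
  calc N.card ≤ (N.filter (·.1 ∈ men) ∪ N.filter (·.2 ∈ women)).card :=
        Finset.card_le_card fun p hp => by
          rcases hcover p hp with h | h <;> simp [hp, h]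
    _ ≤ (N.filter (·.1 ∈ men)).card + (N.filter (·.2 ∈ women)).card := Finset.card_union_le _ _
    _ ≤ men.card + women.card := by
        gcongr
        · exact Finset.card_le_card_of_injOn Prod.fst (fun p hp => (Finset.mem_filter.1 hp).2)
            fun p hp q hq => hN.2.1 p (Finset.mem_filter.1 hp).1 q (Finset.mem_filter.1 hq).1
        · exact Finset.card_le_card_of_injOn Prod.snd (fun p hp => (Finset.mem_filter.1 hp).2)
            fun p hp q hq => hN.2.2 p (Finset.mem_filter.1 hp).1 q (Finset.mem_filter.1 hq).1
    _ ≤ M.card + M.card := add_le_add Finset.card_image_le Finset.card_image_le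
    _ = 2 * M.card := (two_mul _).symm

end Matchings

section TieBreaking

variable {k : ℕ}

/-- Since `e w < k`, the new ranks `r * k + e w` order lexicographically by `(r, e w)`. -/
def breakTies (I : SMInst α β) (e : β ↪ Fin k) : SMInst α β where
  mpref m w := (I.mpref m w).map (· * k + e w)
  wpref := I.wpref

variable {I I' : SMInst α β} {w : β} (e : β ↪ Fin k)

lemma refines_breakTies : I.Refines (I.breakTies e) := by
  refine ⟨fun m w => by simp [mAcc, breakTies], fun _ _ => Iff.rfl, ?_, fun _ _ _ h => h⟩
  rintro m w w' ⟨r, r', hr, hr', hlt⟩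
  refine ⟨r * k + e w, r' * k + e w', by simp [breakTies, hr], by simp [breakTies, hr'], ?_⟩
  have hk : r * k + k ≤ r' * k := by nlinarith
  have := (e w).isLt
  omega

lemma mStrict_breakTies : (I.breakTies e).MStrict := by
  intro m w w' h hacc
  simp only [breakTies, mAcc, Option.isSome_map] at h hacc
  obtain ⟨r, hr⟩ := Option.isSome_iff_exists.1 hacc
  rw [hr, Option.map_some] at h
  obtain ⟨r', -, hr'⟩ := Option.map_eq_some_iff.1 h.symm
  have := congrArg (· % k) hr'
  simp only [Nat.mul_add_mod_of_lt (e w).isLt, Nat.mul_add_mod_of_lt (e w').isLt] at this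
  exact e.injective (Fin.ext this.symm)

lemma wDiffOnly_breakTies (h : I.wDiffOnly I' w) : (I.breakTies e).wDiffOnly (I'.breakTies e) w :=
  ⟨by simp only [SMInst.breakTies, h.1], h.2⟩

end TieBreaking

section DeferredAcceptance

variable (J : SMInst α β)

/- Women-proposing deferred acceptance, with simultaneous rounds. The state `R : β → Set α`
records, for each woman, the men who have rejected her. She proposes to her favourite man outside
`R w`; a man rejects a proposal from a woman he finds unacceptable or while holding a better one. -/

def IsProposal (R : β → Set α) (w : β) (m : α) : Prop :=
  J.wAcc w m ∧ m ∉ R w ∧ ∀ m', J.wAcc w m' → m' ∉ R w → ¬ J.wPref w m' m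

def Holds (R : β → Set α) (m : α) (w : β) : Prop :=
  ∃ w', J.IsProposal R w' m ∧ J.mPref m w' w

def Rejects (R : β → Set α) (m : α) (w : β) : Prop :=
  ¬ J.mAcc m w ∨ J.Holds R m w

def rejectStep (R : β → Set α) : β → Set α :=
  fun w => R w ∪ {m | J.IsProposal R w m ∧ J.Rejects R m w}

def rejections (t : ℕ) : β → Set α :=
  J.rejectStep^[t] ⊥

variable {J} {R R' : β → Set α} {m m' : α} {w w' : β}

lemma IsProposal.of_le (h : J.IsProposal R w m) (hR : R ≤ R') (hm : m ∉ R' w) :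
    J.IsProposal R' w m :=
  ⟨h.1, hm, fun m' hacc hm' => h.2.2 m' hacc fun h' => hm' (hR w h')⟩

lemma IsProposal.mem_of_wPref (h : J.IsProposal R w m) (hpref : J.wPref w m' m) : m' ∈ R w := by
  by_contra hm'
  exact h.2.2 m' (wAcc_of_wPref hpref) hm' hpref

lemma IsProposal.unique (hW : J.WStrict) (h : J.IsProposal R w m) (h' : J.IsProposal R w m') :
    m = m' := by
  by_contra hne
  rcases hW.wPref_or_wPref h.1 h'.1 hne with hpref | hpref
  · exact h'.2.2 m h.1 h.2.1 hpref
  · exact h.2.2 m' h'.1 h'.2.1 hpref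

lemma exists_isProposal (hm : J.wAcc w m) (hR : m ∉ R w) : ∃ m', J.IsProposal R w m' := by
  classical
  have hex : ∃ r m, J.wpref w m = some r ∧ m ∉ R w := by
    obtain ⟨r, hr⟩ := Option.isSome_iff_exists.1 hm
    exact ⟨r, m, hr, hR⟩
  obtain ⟨m', hm', hR'⟩ := Nat.find_spec hex
  refine ⟨m', by simp [wAcc, hm'], hR', ?_⟩
  rintro m'' - hR'' ⟨r, r', hr, hr', hlt⟩
  rw [hm', Option.some.injEq] at hr'
  exact Nat.find_min hex (hr' ▸ hlt) ⟨m'', hr, hR''⟩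

lemma mem_rejectStep (h : J.IsProposal R w m) (hrej : J.Rejects R m w) : m ∈ J.rejectStep R w :=
  Or.inr ⟨h, hrej⟩

lemma IsProposal.rejectStep (h : J.IsProposal R w m) (hrej : ¬ J.Rejects R m w) :
    J.IsProposal (J.rejectStep R) w m :=
  h.of_le (fun _ => Set.subset_union_left) fun hm => hm.elim h.2.1 fun h' => hrej h'.2

lemma exists_favourite (h : J.IsProposal R w m) (hacc : J.mAcc m w) :
    ∃ b, J.IsProposal R b m ∧ J.mAcc m b ∧ ∀ w', J.IsProposal R w' m → ¬ J.mPref m w' b := by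
  classical
  have hex : ∃ r b, J.mpref m b = some r ∧ J.IsProposal R b m := by
    obtain ⟨r, hr⟩ := Option.isSome_iff_exists.1 hacc
    exact ⟨r, w, hr, h⟩
  obtain ⟨b, hb, hbR⟩ := Nat.find_spec hex
  refine ⟨b, hbR, by simp [mAcc, hb], ?_⟩
  rintro w' hw' ⟨r, r', hr, hr', hlt⟩
  rw [hb, Option.some.injEq] at hr'
  exact Nat.find_min hex (hr' ▸ hlt) ⟨w', hr, hw'⟩

lemma not_rejects_of_favourite (hacc : J.mAcc m w)
    (hbest : ∀ w', J.IsProposal R w' m → ¬ J.mPref m w' w) : ¬ J.Rejects R m w := by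
  rintro (hnacc | ⟨w', hw', hpref⟩)
  exacts [hnacc hacc, hbest w' hw' hpref]

/-- The favourite proposer of the man is not rejected. -/
lemma Holds.rejectStep (h : J.Holds R m w) : J.Holds (J.rejectStep R) m w := by
  obtain ⟨w', hw', hpref⟩ := h
  obtain ⟨b, hb, hbacc, hbest⟩ := exists_favourite hw' (mAcc_of_mPref hpref)
  exact ⟨b, hb.rejectStep (not_rejects_of_favourite hbacc hbest),
    mPref_of_not_mPref_of_mPref hbacc (hbest w' hw') hpref⟩

lemma rejections_succ (t : ℕ) : J.rejections (t + 1) = J.rejectStep (J.rejections t) :=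
  Function.iterate_succ_apply' _ _ _

lemma monotone_rejections : Monotone J.rejections :=
  monotone_nat_of_le_succ fun t => by
    rw [rejections_succ]
    exact fun _ => Set.subset_union_left

lemma holds_of_mem_rejections_succ {t : ℕ} (h : m ∈ J.rejections (t + 1) w) (hacc : J.mAcc m w) :
    J.Holds (J.rejections t) m w := by
  induction t with
  | zero =>
    rw [rejections_succ] at h
    obtain h | ⟨-, hrej⟩ := h
    exacts [h.elim, hrej.resolve_left (not_not.2 hacc)]
  | succ t ih =>
    rw [rejections_succ (t + 1)] at h
    obtain h | ⟨-, hrej⟩ := h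
    exacts [rejections_succ t ▸ (ih h).rejectStep, hrej.resolve_left (not_not.2 hacc)]

variable (J) [Finite α] [Finite β]

lemma exists_rejections_eq : ∃ N, ∀ t, N ≤ t → J.rejections N = J.rejections t :=
  WellFoundedGT.monotone_chain_condition ⟨J.rejections, J.monotone_rejections⟩

noncomputable def stopTime : ℕ := J.exists_rejections_eq.choose

noncomputable def daMatching : Finset (α × β) :=
  (Set.toFinite {p : α × β | J.IsProposal (J.rejections J.stopTime) p.2 p.1}).toFinset

variable {J}

lemma mem_daMatching : (m, w) ∈ J.daMatching ↔ J.IsProposal (J.rejections J.stopTime) w m := by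
  simp [daMatching]

lemma rejections_le_stopTime (t : ℕ) : J.rejections t ≤ J.rejections J.stopTime := by
  rcases le_total t J.stopTime with h | h
  · exact J.monotone_rejections h
  · exact (J.exists_rejections_eq.choose_spec t h).ge

lemma rejectStep_stopTime : J.rejectStep (J.rejections J.stopTime) = J.rejections J.stopTime := by
  rw [← rejections_succ]
  exact (J.exists_rejections_eq.choose_spec _ (Nat.le_succ _)).symm

lemma holds_stopTime (h : m ∈ J.rejections J.stopTime w) (hacc : J.mAcc m w) :
    J.Holds (J.rejections J.stopTime) m w :=
  holds_of_mem_rejections_succ (by rwa [rejections_succ, rejectStep_stopTime]) hacc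

lemma not_rejects_of_mem_daMatching (h : (m, w) ∈ J.daMatching) :
    ¬ J.Rejects (J.rejections J.stopTime) m w := fun hrej =>
  (mem_daMatching.1 h).2.1 (rejectStep_stopTime (J := J) ▸ mem_rejectStep (mem_daMatching.1 h) hrej)

lemma mAcc_of_mem_daMatching (h : (m, w) ∈ J.daMatching) : J.mAcc m w :=
  not_not.1 fun hnacc => not_rejects_of_mem_daMatching h (Or.inl hnacc)

lemma isMatching_daMatching (hM : J.MStrict) (hW : J.WStrict) : J.IsMatching J.daMatching := by
  refine ⟨fun ⟨m, w⟩ h => ?_, fun ⟨m, w⟩ h ⟨m', w'⟩ h' hm => ?_, fun ⟨m, w⟩ h ⟨m', w'⟩ h' hw => ?_⟩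
  · exact ⟨mAcc_of_mem_daMatching h, (mem_daMatching.1 h).1⟩
  · obtain rfl : m = m' := hm
    by_contra hne
    have hww' : w ≠ w' := fun hww' => hne (by rw [hww'])
    rcases hM.mPref_or_mPref (mAcc_of_mem_daMatching h) (mAcc_of_mem_daMatching h') hww'
      with hpref | hpref
    · exact not_rejects_of_mem_daMatching h' (Or.inr ⟨w, mem_daMatching.1 h, hpref⟩)
    · exact not_rejects_of_mem_daMatching h (Or.inr ⟨w', mem_daMatching.1 h', hpref⟩)
  · obtain rfl : w = w' := hw
    rw [(mem_daMatching.1 h).unique hW (mem_daMatching.1 h')]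

/-- A blocking woman must have been rejected by the man, who then holds a better proposal. -/
theorem isStable_daMatching (hM : J.MStrict) (hW : J.WStrict) : J.IsStable J.daMatching := by
  have hμ := isMatching_daMatching hM hW
  refine ⟨hμ, fun m w ⟨hmw, hwm, hmside, hwside⟩ => ?_⟩
  have hrej : m ∈ J.rejections J.stopTime w := by
    by_contra hR
    rcases hwside with hsingle | ⟨m', hm', hpref⟩
    · obtain ⟨m', hm'⟩ := exists_isProposal hwm hR
      exact hsingle m' (mem_daMatching.2 hm')
    · exact hR ((mem_daMatching.1 hm').mem_of_wPref hpref)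
  obtain ⟨w', hw', hpref⟩ := holds_stopTime hrej hmw
  rcases hmside with hsingle | ⟨w'', hw'', hpref'⟩
  · exact hsingle w' (mem_daMatching.2 hw')
  · obtain rfl := hμ.eq_of_mem_left hw'' (mem_daMatching.2 hw')
    exact mPref_asymm hpref hpref'

end DeferredAcceptance

section BlockingLemma

variable {J : SMInst α β} {μ ν : Finset (α × β)} {m m' : α} {w b : β}

lemma wPrefMatching.wPref (h : J.wPrefMatching w ν μ) (hμ : J.IsMatching μ)
    (hν : J.IsMatching ν) (hm : (m, w) ∈ μ) (hm' : (m', w) ∈ ν) : J.wPref w m' m := by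
  obtain ⟨m'', hm'', -, hsingle | ⟨m₀, hm₀, hpref⟩⟩ := h
  · exact (hsingle m hm).elim
  · rwa [hν.eq_of_mem_right hm' hm'', hμ.eq_of_mem_right hm hm₀]

lemma wPrefMatching.exists_mem (h : J.wPrefMatching w ν μ) : ∃ m, (m, w) ∈ ν :=
  let ⟨m, hm, _⟩ := h
  ⟨m, hm⟩

lemma IsStable.exists_mPref_of_wPrefMatching (hM : J.MStrict) (hμ : J.IsStable μ)
    (hν : J.IsMatching ν) (hmw : (m, w) ∈ ν) (hw : J.wPrefMatching w ν μ) :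
    ∃ w', (m, w') ∈ μ ∧ J.mPref m w' w := by
  by_contra! hno
  have hne : ∀ w', (m, w') ∈ μ → w ≠ w' := by
    rintro w' hw' rfl
    exact wPref_irrefl (hw.wPref hμ.1 hν hw' hmw)
  obtain ⟨m₀, hm₀, -, hwside⟩ := hw
  obtain rfl := hν.eq_of_mem_right hm₀ hmw
  refine hμ.2 m₀ w ⟨(hν.1 _ hmw).1, (hν.1 _ hmw).2, ?_, hwside⟩
  by_cases hmatched : ∃ w', (m₀, w') ∈ μ
  · obtain ⟨w', hw'⟩ := hmatched
    refine Or.inr ⟨w', hw', ?_⟩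
    exact (hM.mPref_or_mPref (hν.1 _ hmw).1 (hμ.1.1 _ hw').1 (hne w' hw')).resolve_right
      (hno w' hw')
  · exact Or.inl fun w' hw' => hmatched ⟨w', hw'⟩

lemma wSingle_or_wPref_of_not_wPrefMatching (hW : J.WStrict) (hν : J.IsMatching ν)
    (hb : ¬ J.wPrefMatching b ν μ) (hm : J.wAcc b m) (hmν : (m, b) ∉ ν)
    (hbest : ∀ m', (m', b) ∈ μ → m' = m ∨ J.wPref b m m') :
    wSingle ν b ∨ ∃ m₀, (m₀, b) ∈ ν ∧ J.wPref b m m₀ := by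
  by_cases hsingle : wSingle ν b
  · exact Or.inl hsingle
  obtain ⟨m₀, hm₀⟩ := not_forall_not.1 hsingle
  have hacc₀ := (hν.1 _ hm₀).2
  have hμside : ¬ (wSingle μ b ∨ ∃ m', (m', b) ∈ μ ∧ J.wPref b m₀ m') :=
    fun h => hb ⟨m₀, hm₀, hacc₀, h⟩
  simp only [not_or, not_exists, not_and] at hμside
  obtain ⟨m', hm'⟩ := not_forall_not.1 hμside.1
  refine Or.inr ⟨m₀, hm₀, ?_⟩
  rcases hbest m' hm' with rfl | hpref
  · have hne : m' ≠ m₀ := by rintro rfl; exact hmν hm₀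
    exact (hW.wPref_or_wPref hm hacc₀ hne).resolve_right (hμside.2 m' hm')
  · exact wPref_of_wPref_of_not_wPref hpref hacc₀ (hμside.2 m' hm')

/-- `w ↦ μ (ν w)` is an injective self-map of the finite set `W`, hence onto. -/
lemma IsMatching.surj_of_mapsTo [Finite β] {W : Set β} (hμ : J.IsMatching μ)
    (hν : J.IsMatching ν) (h : ∀ w ∈ W, ∃ m w', (m, w) ∈ ν ∧ (m, w') ∈ μ ∧ w' ∈ W) :
    ∀ w ∈ W, ∃ m u, (m, w) ∈ μ ∧ (m, u) ∈ ν ∧ u ∈ W := by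
  have h' : ∀ w : W, ∃ m, ∃ w' : W, (m, w.1) ∈ ν ∧ (m, w'.1) ∈ μ := fun w => by
    obtain ⟨m, w', hm, hm', hw'⟩ := h w w.2
    exact ⟨m, ⟨w', hw'⟩, hm, hm'⟩
  choose man next hman hnext using h'
  have hinj : Function.Injective next := by
    intro u v huv
    have hm : man u = man v := hμ.eq_of_mem_right (hnext u) (huv ▸ hnext v)
    exact Subtype.ext (hν.eq_of_mem_left (hman u) (hm ▸ hman v))
  intro w hw
  obtain ⟨u, hu⟩ := Finite.injective_iff_surjective.1 hinj ⟨w, hw⟩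
  exact ⟨man u, u, by simpa [hu] using hnext u, hman u, u.2⟩

variable [Finite α] [Finite β]

lemma IsProposal.eq_or_wPref_of_mem_daMatching (hW : J.WStrict) {t : ℕ}
    (h : J.IsProposal (J.rejections t) w m) (hm' : (m', w) ∈ J.daMatching) :
    m' = m ∨ J.wPref w m m' := by
  by_cases hne : m' = m
  · exact Or.inl hne
  have hfinal := mem_daMatching.1 hm'
  refine Or.inr ((hW.wPref_or_wPref h.1 hfinal.1 (Ne.symm hne)).resolve_right fun hpref => ?_)
  exact hfinal.2.1 (rejections_le_stopTime t w (h.mem_of_wPref hpref))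

/-- `t + 1` is the first round from which every woman of `W` proposes to her final partner; it is
positive because some woman of `W` ends below her favourite. -/
lemma exists_last_round {W : Set β}
    (hbelow : ∃ w ∈ W, ∃ m m', (m, w) ∈ J.daMatching ∧ J.wPref w m' m) :
    ∃ t, (∃ w ∈ W, ∃ m, (m, w) ∈ J.daMatching ∧ ¬ J.IsProposal (J.rejections t) w m) ∧
      ∀ w ∈ W, ∀ m, (m, w) ∈ J.daMatching → J.IsProposal (J.rejections (t + 1)) w m := by
  classical
  have hP : ∃ t, ∀ w ∈ W, ∀ m, (m, w) ∈ J.daMatching → J.IsProposal (J.rejections t) w m :=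
    ⟨J.stopTime, fun w _ m h => mem_daMatching.1 h⟩
  obtain ⟨t, ht⟩ : ∃ t, Nat.find hP = t + 1 := by
    refine Nat.exists_eq_add_one.2 (Nat.pos_of_ne_zero fun h0 => ?_)
    obtain ⟨w, hw, m, m', hm, hpref⟩ := hbelow
    exact ((h0 ▸ Nat.find_spec hP) w hw m hm).mem_of_wPref hpref
  refine ⟨t, ?_, ht ▸ Nat.find_spec hP⟩
  by_contra! hno
  exact Nat.find_min hP (ht ▸ Nat.lt_succ_self t) hno

/-- Let `t` be the last round in which some woman `w₁` preferring `ν` does not yet propose to her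
final partner `m`. The `ν`-partner of `m` prefers `ν` too, so `m` rejected her before round
`t + 1`; hence in round `t` he holds a proposal better than hers, whose sender blocks `ν`
together with `m`. -/
lemma exists_blocks_of_wPrefMatching_of_surj (hM : J.MStrict) (hW : J.WStrict)
    (hν : J.IsMatching ν) {w₀ : β} (hw₀ : J.wPrefMatching w₀ ν J.daMatching)
    (hsurj : ∀ w, J.wPrefMatching w ν J.daMatching → ∃ m u, (m, w) ∈ J.daMatching ∧
      (m, u) ∈ ν ∧ J.wPrefMatching u ν J.daMatching) :
    ∃ m b, J.Blocks ν m b ∧ ¬ J.wPrefMatching b ν J.daMatching := by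
  have hμ := isMatching_daMatching hM hW
  have hbelow : ∃ w ∈ {w | J.wPrefMatching w ν J.daMatching}, ∃ m m',
      (m, w) ∈ J.daMatching ∧ J.wPref w m' m := by
    obtain ⟨m, -, hm, -⟩ := hsurj w₀ hw₀
    obtain ⟨m', hm'⟩ := hw₀.exists_mem
    exact ⟨w₀, hw₀, m, m', hm, hw₀.wPref hμ hν hm hm'⟩
  obtain ⟨t, ⟨w₁, hw₁, m, hm, hnot⟩, hlast⟩ := exists_last_round hbelow
  obtain ⟨m', u, hm', hu, huW⟩ := hsurj w₁ hw₁
  obtain rfl := hμ.eq_of_mem_right hm hm'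
  obtain ⟨m₂, -, hm₂, -⟩ := hsurj u huW
  have hrej : m ∈ J.rejections (t + 1) u :=
    (hlast u huW m₂ hm₂).mem_of_wPref (huW.wPref hμ hν hm₂ hu)
  obtain ⟨w', hw', hpref⟩ := holds_of_mem_rejections_succ hrej (hν.1 _ hu).1
  obtain ⟨b, hb, hbacc, hbest⟩ := exists_favourite hw' (mAcc_of_mPref hpref)
  have hb' : J.IsProposal (J.rejections (t + 1)) b m :=
    rejections_succ t ▸ hb.rejectStep (not_rejects_of_favourite hbacc hbest)
  have hbw₁ : b ≠ w₁ := by rintro rfl; exact hnot hb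
  have hbW : ¬ J.wPrefMatching b ν J.daMatching := by
    intro hbW
    obtain ⟨m₃, -, hm₃, -⟩ := hsurj b hbW
    obtain rfl := (hlast b hbW m₃ hm₃).unique hW hb'
    exact hbw₁ (hμ.eq_of_mem_left hm₃ hm)
  refine ⟨m, b, ⟨hbacc, hb.1, Or.inr ⟨u, hu, ?_⟩, ?_⟩, hbW⟩
  · exact mPref_of_not_mPref_of_mPref hbacc (hbest w' hw') hpref
  refine wSingle_or_wPref_of_not_wPrefMatching hW hν hbW hb.1 (fun h => ?_)
    fun m'' hm'' => hb'.eq_or_wPref_of_mem_daMatching hW hm''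
  obtain rfl := hν.eq_of_mem_left h hu
  exact hbW huW

/-- The Blocking Lemma of Gale and Sotomayor. Either a man `ν`-matched to a woman preferring `ν`
is matched by deferred acceptance to a woman who does not, and the two block `ν`, or
`w ↦ μ (ν w)` maps the women preferring `ν` to themselves. -/
theorem exists_blocks_of_wPrefMatching (hM : J.MStrict) (hW : J.WStrict)
    (hν : J.IsMatching ν) {w₀ : β} (hw₀ : J.wPrefMatching w₀ ν J.daMatching) :
    ∃ m b, J.Blocks ν m b ∧ ¬ J.wPrefMatching b ν J.daMatching := by
  have hμ := isStable_daMatching hM hW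
  have hnext w (hw : J.wPrefMatching w ν J.daMatching) m (hm : (m, w) ∈ ν) :=
    hμ.exists_mPref_of_wPrefMatching hM hν hm hw
  by_cases hcase : ∃ w m w', J.wPrefMatching w ν J.daMatching ∧ (m, w) ∈ ν ∧
      (m, w') ∈ J.daMatching ∧ J.mPref m w' w ∧ ¬ J.wPrefMatching w' ν J.daMatching
  · obtain ⟨w, m, w', hw, hmw, hmw', hpref, hw'⟩ := hcase
    refine ⟨m, w', ⟨(hμ.1.1 _ hmw').1, (hμ.1.1 _ hmw').2, Or.inr ⟨w, hmw, hpref⟩, ?_⟩, hw'⟩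
    refine wSingle_or_wPref_of_not_wPrefMatching hW hν hw' (hμ.1.1 _ hmw').2 (fun h => ?_)
      fun m' hm' => Or.inl (hμ.1.eq_of_mem_right hm' hmw')
    obtain rfl := hν.eq_of_mem_left hmw h
    exact hw' hw
  push Not at hcase
  refine exists_blocks_of_wPrefMatching_of_surj hM hW hν hw₀ (hμ.1.surj_of_mapsTo hν ?_)
  intro w hw
  obtain ⟨m, hm⟩ := wPrefMatching.exists_mem hw
  obtain ⟨w', hw', hpref⟩ := hnext w hw m hm
  exact ⟨m, w', hm, hw', hcase w m w' hw hm hw' hpref⟩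

/-- Dubins–Freedman: by the Blocking Lemma, the outcome of a profitable misreport would be blocked
by a pair whose woman reported truthfully. -/
theorem not_wPrefMatching_daMatching {J' : SMInst α β} (hM : J.MStrict) (hW : J.WStrict)
    (hM' : J'.MStrict) (hW' : J'.WStrict) (hJJ' : J.wDiffOnly J' w) :
    ¬ J.wPrefMatching w J'.daMatching J.daMatching := by
  intro hw
  have hμ' := isStable_daMatching hM' hW'
  have hν : J.IsMatching J'.daMatching := by
    refine hμ'.1.of_wDiffOnly hJJ' fun m' hm' => ?_
    obtain ⟨m, hm, hacc, -⟩ := hw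
    rwa [hμ'.1.eq_of_mem_right hm' hm]
  obtain ⟨m, b, hblocks, hb⟩ := exists_blocks_of_wPrefMatching hM hW hν hw
  have hbw : b ≠ w := by rintro rfl; exact hb hw
  exact hμ'.2 m b ((blocks_congr (congrFun hJJ'.1 m) (hJJ'.2 b hbw)).1 hblocks)

end BlockingLemma

end SMInst

open SMInst in
/-- MAX SMTI-1TM admits a woman-strategy-proof 2-approximate-stable mechanism. -/
theorem woman_sp_two_approx_stable_mechanism_SMTI1TM :
    ∃ S : ∀ n : ℕ, SMInst (Fin n) (Fin n) → Finset (Fin n × Fin n),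
      (∀ (n : ℕ) (I : SMInst (Fin n) (Fin n)), I.OneTM →
          I.IsStable (S n I) ∧
          ∀ Mopt : Finset (Fin n × Fin n), I.IsStable Mopt →
            Mopt.card ≤ 2 * (S n I).card) ∧
      ¬ ∃ (n : ℕ) (I I' : SMInst (Fin n) (Fin n)) (w : Fin n),
          I.OneTM ∧ I'.OneTM ∧ SMInst.wDiffOnly I I' w ∧
          I.wPrefMatching w (S n I') (S n I) := by
  refine ⟨fun n I => (I.breakTies (Function.Embedding.refl _)).daMatching, fun n I hI => ?_, ?_⟩
  · have hS := (refines_breakTies (I := I) (Function.Embedding.refl _)).isStable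
      (isStable_daMatching (mStrict_breakTies _) hI)
    exact ⟨hS, fun Mopt hMopt => hMopt.1.card_le_two_mul hS⟩
  · rintro ⟨n, I, I', w, hI, hI', hII', hw⟩
    exact not_wPrefMatching_daMatching (mStrict_breakTies _) hI (mStrict_breakTies _) hI'
      (wDiffOnly_breakTies _ hII') hw
end

section
/- For every ε > 0, MAX SMTI-1TM admits no woman-strategy-proof (2−ε)-approximate-stable mechanism: every mechanism S on SMTI-1TM instances that is a (2−ε)-approximate-stable mechanism fails to be woman-strategy-proof. -/
section Aux

namespace SMInst

variable {α β : Type}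

/-- Auxiliary comparison on option ranks. -/
def optLT : Option ℕ → Option ℕ → Prop
  | some r, some r' => r < r'
  | _, _ => False

instance : ∀ o o' : Option ℕ, Decidable (optLT o o')
  | some _, some _ => inferInstanceAs (Decidable (_ < _))
  | some _, none => inferInstanceAs (Decidable False)
  | none, some _ => inferInstanceAs (Decidable False)
  | none, none => inferInstanceAs (Decidable False)

lemma mPref_iff (I : SMInst α β) (m : α) (w w' : β) :
    I.mPref m w w' ↔ optLT (I.mpref m w) (I.mpref m w') := by
  unfold mPref
  cases h : I.mpref m w <;> cases h' : I.mpref m w' <;> simp [optLT]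

lemma wPref_iff (I : SMInst α β) (w : β) (m m' : α) :
    I.wPref w m m' ↔ optLT (I.wpref w m) (I.wpref w m') := by
  unfold wPref
  cases h : I.wpref w m <;> cases h' : I.wpref w m' <;> simp [optLT]

instance (I : SMInst α β) (m : α) (w w' : β) : Decidable (I.mPref m w w') :=
  decidable_of_iff _ (mPref_iff I m w w').symm

instance (I : SMInst α β) (w : β) (m m' : α) : Decidable (I.wPref w m m') :=
  decidable_of_iff _ (wPref_iff I w m m').symm

instance (I : SMInst α β) (m : α) (w : β) : Decidable (I.mAcc m w) := by
  unfold mAcc; infer_instance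

instance (I : SMInst α β) (w : β) (m : α) : Decidable (I.wAcc w m) := by
  unfold wAcc; infer_instance

instance [Fintype β] [DecidableEq α] [DecidableEq β]
    (M : Finset (α × β)) (m : α) : Decidable (mSingle M m) := by
  unfold mSingle; infer_instance

instance [Fintype α] [DecidableEq α] [DecidableEq β]
    (M : Finset (α × β)) (w : β) : Decidable (wSingle M w) := by
  unfold wSingle; infer_instance

instance [Fintype α] [Fintype β] [DecidableEq α] [DecidableEq β]
    (I : SMInst α β) (M : Finset (α × β)) (m : α) (w : β) :
    Decidable (I.Blocks M m w) := by
  unfold Blocks; infer_instance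

instance [DecidableEq α] [DecidableEq β] (I : SMInst α β) (M : Finset (α × β)) :
    Decidable (I.IsMatching M) := by
  unfold IsMatching; infer_instance

instance [Fintype α] [Fintype β] [DecidableEq α] [DecidableEq β]
    (I : SMInst α β) (M : Finset (α × β)) : Decidable (I.IsStable M) := by
  unfold IsStable; infer_instance

instance [Fintype α] [Fintype β] [DecidableEq β] (I : SMInst α β) :
    Decidable (I.MStrict) := by
  unfold MStrict; infer_instance

instance [Fintype α] [Fintype β] [DecidableEq α] (I : SMInst α β) :
    Decidable (I.WStrict) := by
  unfold WStrict; infer_instance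

instance [Fintype α] [Fintype β] [DecidableEq α] (I : SMInst α β) :
    Decidable (I.OneTM) := by
  unfold OneTM; infer_instance

end SMInst

/-- Men's preferences, common to all three instances:
man 0 : w0 ~ w1 (a tie); man 1 : w0 only; man 2 : w1 only. -/
def mpEx (m w : Fin 3) : Option ℕ :=
  match m.val, w.val with
  | 0, 0 => some 0
  | 0, 1 => some 0
  | 1, 0 => some 0
  | 2, 1 => some 0
  | _, _ => none

/-- Women's true preferences: w0 : m0 > m1 ; w1 : m0 > m2 ; w2 : empty. -/
def wpExA (w m : Fin 3) : Option ℕ :=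
  match w.val, m.val with
  | 0, 0 => some 0
  | 0, 1 => some 1
  | 1, 0 => some 0
  | 1, 2 => some 1
  | _, _ => none

/-- Women's preferences after w0 truncates to m0 only. -/
def wpExB (w m : Fin 3) : Option ℕ :=
  match w.val, m.val with
  | 0, 0 => some 0
  | 1, 0 => some 0
  | 1, 2 => some 1
  | _, _ => none

/-- Women's preferences after w1 truncates to m0 only. -/
def wpExC (w m : Fin 3) : Option ℕ :=
  match w.val, m.val with
  | 0, 0 => some 0
  | 0, 1 => some 1
  | 1, 0 => some 0
  | _, _ => none

def IexA : SMInst (Fin 3) (Fin 3) := ⟨mpEx, wpExA⟩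
def IexB : SMInst (Fin 3) (Fin 3) := ⟨mpEx, wpExB⟩
def IexC : SMInst (Fin 3) (Fin 3) := ⟨mpEx, wpExC⟩

def MexA : Finset (Fin 3 × Fin 3) := {(0, 0), (2, 1)}
def MexB : Finset (Fin 3 × Fin 3) := {(1, 0), (0, 1)}

set_option maxRecDepth 100000 in
lemma keyA : ∀ M : Finset (Fin 3 × Fin 3),
    IexA.IsStable M → 2 ≤ M.card → M = MexA ∨ M = MexB := by decide

set_option maxRecDepth 100000 in
lemma keyB : ∀ M : Finset (Fin 3 × Fin 3),
    IexB.IsStable M → 2 ≤ M.card → M = MexA := by decide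

set_option maxRecDepth 100000 in
lemma keyC : ∀ M : Finset (Fin 3 × Fin 3),
    IexC.IsStable M → 2 ≤ M.card → M = MexB := by decide

lemma card_ge_two {ε : ℝ} (hε : 0 < ε) {c : ℕ} (h : (2 : ℝ) ≤ (2 - ε) * c) :
    2 ≤ c := by
  by_contra hc
  push_neg at hc
  have hc' : (c : ℝ) ≤ 1 := by exact_mod_cast Nat.lt_succ_iff.mp hc
  have hnn : (0 : ℝ) ≤ (c : ℝ) := Nat.cast_nonneg c
  nlinarith [mul_nonneg hε.le hnn]

end Aux

/-- For every `ε > 0`, MAX SMTI-1TM admits no woman-strategy-proof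
`(2 - ε)`-approximate-stable mechanism. -/
theorem no_woman_sp_sub_two_approx_stable_mechanism_SMTI1TM (ε : ℝ) (hε : 0 < ε)
    (S : ∀ n : ℕ, SMInst (Fin n) (Fin n) → Finset (Fin n × Fin n))
    (happrox : ∀ (n : ℕ) (I : SMInst (Fin n) (Fin n)), I.OneTM →
        I.IsStable (S n I) ∧
        ∀ Mopt : Finset (Fin n × Fin n), I.IsStable Mopt →
          (Mopt.card : ℝ) ≤ (2 - ε) * (S n I).card) :
    ∃ (n : ℕ) (I I' : SMInst (Fin n) (Fin n)) (w : Fin n),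
      I.OneTM ∧ I'.OneTM ∧ SMInst.wDiffOnly I I' w ∧
      I.wPrefMatching w (S n I') (S n I) := by
  -- Run the mechanism on the true instance `IexA`.
  obtain ⟨hstabA, hboundA⟩ := happrox 3 IexA (by decide)
  have hMAstable : IexA.IsStable MexA := by decide
  have hcardMA : (MexA.card : ℝ) = 2 := by norm_num [show MexA.card = 2 by decide]
  have h2A : (2 : ℝ) ≤ (2 - ε) * (S 3 IexA).card := by
    have := hboundA MexA hMAstable; rwa [hcardMA] at this
  have hgeA : 2 ≤ (S 3 IexA).card := card_ge_two hε h2A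
  rcases keyA (S 3 IexA) hstabA hgeA with hSA | hSA
  · -- `S 3 IexA = MexA`: woman 1 is matched to man 2 but prefers man 0.
    -- She misreports as in `IexC`, where the mechanism is forced to give her man 0.
    obtain ⟨hstabC, hboundC⟩ := happrox 3 IexC (by decide)
    have hMBstable : IexC.IsStable MexB := by decide
    have h2C : (2 : ℝ) ≤ (2 - ε) * (S 3 IexC).card := by
      have := hboundC MexB hMBstable
      rwa [show (MexB.card : ℝ) = 2 by norm_num [show MexB.card = 2 by decide]] at this
    have hSC : S 3 IexC = MexB := keyC (S 3 IexC) hstabC (card_ge_two hε h2C)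
    refine ⟨3, IexA, IexC, 1, by decide, by decide, ⟨rfl, by decide⟩, ?_⟩
    refine ⟨0, ?_, by decide, Or.inr ⟨2, ?_, 0, 1, rfl, rfl, Nat.zero_lt_one⟩⟩
    · rw [hSC]; decide
    · rw [hSA]; decide
  · -- `S 3 IexA = MexB`: woman 0 is matched to man 1 but prefers man 0.
    -- She misreports as in `IexB`, where the mechanism is forced to give her man 0.
    obtain ⟨hstabB, hboundB⟩ := happrox 3 IexB (by decide)
    have hMAstableB : IexB.IsStable MexA := by decide
    have h2B : (2 : ℝ) ≤ (2 - ε) * (S 3 IexB).card := by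
      have := hboundB MexA hMAstableB; rwa [hcardMA] at this
    have hSB : S 3 IexB = MexA := keyB (S 3 IexB) hstabB (card_ge_two hε h2B)
    refine ⟨3, IexA, IexB, 0, by decide, by decide, ⟨rfl, by decide⟩, ?_⟩
    refine ⟨0, ?_, by decide, Or.inr ⟨1, ?_, 0, 1, rfl, rfl, Nat.zero_lt_one⟩⟩
    · rw [hSB]; decide
    · rw [hSA]; decide
end
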